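/- Fix $t \in (0,1)$ and $p > 1$. The function $x \mapsto x^{1-p}\varphi(x,t)^p + (1-x)^{1-p}(1 - \varphi(x,t))^p$ is strictly decreasing on $(0, 1-t)$, where $\varphi(x,t) = (\sqrt{x(1-t)} + \sqrt{t(1-x)})^2$. -/

import Mathlib

/-!
Write `a = √(φ/x)` and `b = √((1 - φ)/(1 - x))`. In the coordinates `√x`, `√(1-x)`, `√t`,
`√(1-t)` one finds `φ' = a b` and `a - b = √t / √(x (1 - x)) > 0`, so the derivative of the
function is `a^(2p-1) ((1-p) a + p b) - b^(2p-1) ((1-p) b + p a)`. By homogeneity its sign is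
that of `r^(2p-1) ((1-p) r + p) - ((1-p) + p r)` with `r = a/b > 1`. This is negative: it is
trivially so when `(1-p) r + p ≤ 0`, and otherwise, after taking logarithms,
`log ((1-p) + p r) - log ((1-p) r + p) - (2p-1) log r` vanishes at `r = 1` and has derivative
`p (p-1) (2p-1) (r-1)² / (r ((1-p) + p r) ((1-p) r + p)) > 0`.
-/

open Real Set

lemma strictMonoOn_log_sub_log_sub_mul_log {p r : ℝ} (hp : 1 < p) (hr : 0 < (1 - p) * r + p) :
    StrictMonoOn (fun y ↦ log ((1 - p) + p * y) - log ((1 - p) * y + p) - (2 * p - 1) * log y)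
      (Icc 1 r) := by
  have hpos : ∀ y ∈ Icc 1 r, 0 < (1 - p) + p * y ∧ 0 < (1 - p) * y + p ∧ 0 < y := by
    rintro y ⟨hy1, hyr⟩
    exact ⟨by nlinarith, by nlinarith, by linarith⟩
  have hderiv : ∀ y ∈ Icc 1 r, HasDerivAt
      (fun y ↦ log ((1 - p) + p * y) - log ((1 - p) * y + p) - (2 * p - 1) * log y)
      (p / ((1 - p) + p * y) - (1 - p) / ((1 - p) * y + p) - (2 * p - 1) * y⁻¹) y := by
    intro y hy
    obtain ⟨h1, h2, h3⟩ := hpos y hy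
    have d1 := (((hasDerivAt_id y).const_mul p).const_add (1 - p)).log h1.ne'
    have d2 := (((hasDerivAt_id y).const_mul (1 - p)).add_const p).log h2.ne'
    have d3 := (hasDerivAt_log h3.ne').const_mul (2 * p - 1)
    exact ((d1.sub d2).sub d3).congr_deriv (by simp)
  apply strictMonoOn_of_deriv_pos (convex_Icc 1 r)
  · exact fun y hy ↦ (hderiv y hy).continuousAt.continuousWithinAt
  · intro y hy
    rw [interior_Icc] at hy
    have hy' : y ∈ Icc 1 r := Ioo_subset_Icc_self hy
    obtain ⟨h1, h2, h3⟩ := hpos y hy'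
    rw [(hderiv y hy').deriv]
    have key : p / ((1 - p) + p * y) - (1 - p) / ((1 - p) * y + p) - (2 * p - 1) * y⁻¹
        = p * (p - 1) * (2 * p - 1) * (y - 1) ^ 2
          / (((1 - p) + p * y) * ((1 - p) * y + p) * y) := by
      field_simp
      ring
    rw [key]
    have : 0 < y - 1 := sub_pos.2 hy.1
    have : 0 < p - 1 := sub_pos.2 hp
    have : 0 < 2 * p - 1 := by linarith
    have : 0 < p := by linarith
    positivity

lemma rpow_two_mul_sub_one_mul_lt {p r : ℝ} (hp : 1 < p) (hr : 1 < r) :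
    r ^ (2 * p - 1) * ((1 - p) * r + p) < (1 - p) + p * r := by
  rcases le_or_gt ((1 - p) * r + p) 0 with hneg | hpos
  · have := mul_nonpos_of_nonneg_of_nonpos (rpow_nonneg (by linarith : (0:ℝ) ≤ r) (2 * p - 1))
      hneg
    nlinarith
  have hlt := strictMonoOn_log_sub_log_sub_mul_log hp hpos (left_mem_Icc.2 hr.le)
    (right_mem_Icc.2 hr.le) hr
  simp only [mul_one, sub_add_cancel, log_one, mul_zero, sub_self] at hlt
  have hr0 : 0 < r := by linarith
  have h1 : 0 < (1 - p) + p * r := by nlinarith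
  have hrp : 0 < r ^ (2 * p - 1) := rpow_pos_of_pos hr0 _
  rw [← log_lt_log_iff (mul_pos hrp hpos) h1, log_mul hrp.ne' hpos.ne', log_rpow hr0]
  linarith

lemma rpow_two_mul_sub_one_mul_lt_of_lt {p a b : ℝ} (hp : 1 < p) (hb : 0 < b) (hba : b < a) :
    a ^ (2 * p - 1) * ((1 - p) * a + p * b) < b ^ (2 * p - 1) * ((1 - p) * b + p * a) := by
  have hr : 1 < a / b := (one_lt_div hb).2 hba
  have hbp : 0 < b ^ (2 * p - 1) * b := mul_pos (rpow_pos_of_pos hb _) hb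
  calc a ^ (2 * p - 1) * ((1 - p) * a + p * b)
      = b ^ (2 * p - 1) * b * ((a / b) ^ (2 * p - 1) * ((1 - p) * (a / b) + p)) := by
        rw [div_rpow (hb.trans hba).le hb.le]
        field_simp
    _ < b ^ (2 * p - 1) * b * ((1 - p) + p * (a / b)) :=
        mul_lt_mul_of_pos_left (rpow_two_mul_sub_one_mul_lt hp hr) hbp
    _ = b ^ (2 * p - 1) * ((1 - p) * b + p * a) := by field_simp

lemma sq_rpow_sub_one_mul {p a : ℝ} (ha : 0 < a) (b : ℝ) :
    (a ^ 2) ^ (p - 1) * ((1 - p) * a ^ 2 + p * a * b)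
      = a ^ (2 * p - 1) * ((1 - p) * a + p * b) := by
  rw [← rpow_natCast_mul ha.le, show 2 * p - 1 = (2:ℕ) * (p - 1) + 1 by push_cast; ring,
    rpow_add_one ha.ne']
  ring

lemma HasDerivAt.rpow_one_sub_mul_rpow {u g : ℝ → ℝ} {u' g' x : ℝ} (p : ℝ)
    (hu : HasDerivAt u u' x) (hg : HasDerivAt g g' x) (hux : 0 < u x) (hgx : 0 < g x) :
    HasDerivAt (fun y ↦ u y ^ (1 - p) * g y ^ p)
      ((g x / u x) ^ (p - 1) * ((1 - p) * (g x / u x) * u' + p * g')) x := by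
  refine ((hu.rpow_const (p := 1 - p) (Or.inl hux.ne')).mul
    (hg.rpow_const (Or.inl hgx.ne'))).congr_deriv ?_
  rw [div_rpow hgx.le hux.le, rpow_sub_one hux.ne', rpow_sub_one hux.ne', rpow_sub_one hgx.ne',
    rpow_sub hux, rpow_one]
  have := (rpow_pos_of_pos hux p).ne'
  have := (rpow_pos_of_pos hgx p).ne'
  field_simp

noncomputable def phi (t x : ℝ) : ℝ := (√(x * (1 - t)) + √(t * (1 - x))) ^ 2

lemma phi_eq_sq {t x : ℝ} (ht : 0 ≤ t) (hx : 0 ≤ x) :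
    phi t x = (√x * √(1 - t) + √t * √(1 - x)) ^ 2 := by
  rw [phi, sqrt_mul hx, sqrt_mul ht]

lemma one_sub_phi_eq_sq {t x : ℝ} (ht : t ∈ Icc 0 1) (hx : x ∈ Icc 0 1) :
    1 - phi t x = (√(1 - x) * √(1 - t) - √x * √t) ^ 2 := by
  obtain ⟨ht0, ht1⟩ := ht
  obtain ⟨hx0, hx1⟩ := hx
  rw [phi_eq_sq ht0 hx0]
  linear_combination (-(√t ^ 2 + √(1 - t) ^ 2)) * sq_sqrt hx0 - (sq_sqrt (sub_nonneg.2 hx1))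
    * (√t ^ 2 + √(1 - t) ^ 2) - sq_sqrt ht0 - sq_sqrt (sub_nonneg.2 ht1)

lemma sqrt_phi {t x : ℝ} (ht : 0 ≤ t) (hx : 0 ≤ x) :
    √(phi t x) = √x * √(1 - t) + √t * √(1 - x) := by
  rw [phi_eq_sq ht hx, sqrt_sq (by positivity)]

lemma sqrt_one_sub_phi {t x : ℝ} (ht : 0 ≤ t) (hx : x ∈ Icc 0 (1 - t)) :
    √(1 - phi t x) = √(1 - x) * √(1 - t) - √x * √t := by
  obtain ⟨hx0, hx1⟩ := hx
  rw [one_sub_phi_eq_sq ⟨ht, by linarith⟩ ⟨hx0, by linarith⟩, sqrt_sq]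
  rw [sub_nonneg, mul_comm √x]
  exact mul_le_mul (sqrt_le_sqrt (by linarith)) (sqrt_le_sqrt hx1) (sqrt_nonneg _) (sqrt_nonneg _)

lemma phi_pos {t x : ℝ} (ht : t < 1) (hx : 0 < x) : 0 < phi t x := by
  have : 0 < √(x * (1 - t)) := sqrt_pos.2 (mul_pos hx (by linarith))
  rw [phi]
  positivity

lemma phi_lt_one {t x : ℝ} (ht : 0 ≤ t) (hx : x ∈ Ico 0 (1 - t)) : phi t x < 1 := by
  obtain ⟨hx0, hx1⟩ := hx
  rw [← sub_pos, one_sub_phi_eq_sq ⟨ht, by linarith⟩ ⟨hx0, by linarith⟩, sq_pos_iff,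
    sub_ne_zero, mul_comm √x]
  refine (ne_of_lt ?_).symm
  exact mul_lt_mul' (sqrt_le_sqrt (by linarith)) (sqrt_lt_sqrt hx0 hx1) (sqrt_nonneg _)
    (sqrt_pos.2 (by linarith))

lemma sqrt_one_sub_phi_div_lt {t x : ℝ} (ht : 0 < t) (hx : x ∈ Ioo 0 (1 - t)) :
    √((1 - phi t x) / (1 - x)) < √(phi t x / x) := by
  obtain ⟨hx0, hx1⟩ := hx
  have hA : 0 < √x := sqrt_pos.2 hx0
  have hB : 0 < √(1 - x) := sqrt_pos.2 (by linarith)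
  have hc : 0 < √t := sqrt_pos.2 ht
  rw [sqrt_div' _ hx0.le, sqrt_div' _ (by linarith), sqrt_phi ht.le hx0.le,
    sqrt_one_sub_phi ht.le ⟨hx0.le, hx1.le⟩, div_lt_div_iff₀ hB hA]
  nlinarith [sq_sqrt hx0.le, sq_sqrt (by linarith : (0:ℝ) ≤ 1 - x)]

lemma hasDerivAt_phi {t x : ℝ} (ht : 0 < t) (hx : x ∈ Ioo 0 (1 - t)) :
    HasDerivAt (phi t) (√(phi t x / x) * √((1 - phi t x) / (1 - x))) x := by
  obtain ⟨hx0, hx1⟩ := hx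
  have h1t : 0 < 1 - t := by linarith
  have h1x : 0 < 1 - x := by linarith
  have hA := (sqrt_pos.2 hx0).ne'
  have hB := (sqrt_pos.2 h1x).ne'
  have hS : HasDerivAt (fun y ↦ √(y * (1 - t)) + √(t * (1 - y)))
      (√(1 - t) / (2 * √x) - √t / (2 * √(1 - x))) x := by
    refine ((((hasDerivAt_id x).mul_const (1 - t)).sqrt (mul_pos hx0 h1t).ne').add
      ((((hasDerivAt_id x).const_sub 1).const_mul t).sqrt (mul_pos ht h1x).ne')).congr_deriv ?_
    have := (sqrt_pos.2 ht).ne'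
    have := (sqrt_pos.2 h1t).ne'
    simp only [id_eq, sqrt_mul hx0.le, sqrt_mul ht.le]
    field_simp
    linear_combination √x * √(1 - t) * sq_sqrt ht.le - √t * √(1 - x) * sq_sqrt h1t.le
  refine (hS.pow 2).congr_deriv ?_
  rw [sqrt_div' _ hx0.le, sqrt_div' _ h1x.le, sqrt_phi ht.le hx0.le,
    sqrt_one_sub_phi ht.le ⟨hx0.le, hx1.le⟩, sqrt_mul hx0.le, sqrt_mul ht.le]
  field_simp
  ring

lemma exists_neg_hasDerivAt_rpow_phi {t p x : ℝ} (ht : 0 < t) (hp : 1 < p)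
    (hx : x ∈ Ioo 0 (1 - t)) :
    ∃ f' < 0, HasDerivAt
      (fun y ↦ y ^ (1 - p) * phi t y ^ p + (1 - y) ^ (1 - p) * (1 - phi t y) ^ p) f' x := by
  obtain ⟨hx0, hx1⟩ := hx
  have hφ0 : 0 < phi t x := phi_pos (by linarith) hx0
  have hφ1 : 0 < 1 - phi t x := sub_pos.2 (phi_lt_one ht.le ⟨hx0.le, hx1⟩)
  have h1x : 0 < 1 - x := by linarith
  have hφ' := hasDerivAt_phi ht ⟨hx0, hx1⟩
  set a := √(phi t x / x)
  set b := √((1 - phi t x) / (1 - x))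
  have ha2 : phi t x / x = a ^ 2 := (sq_sqrt (div_pos hφ0 hx0).le).symm
  have hb2 : (1 - phi t x) / (1 - x) = b ^ 2 := (sq_sqrt (div_pos hφ1 h1x).le).symm
  have hb : 0 < b := sqrt_pos.2 (div_pos hφ1 h1x)
  have hba : b < a := sqrt_one_sub_phi_div_lt ht ⟨hx0, hx1⟩
  refine ⟨_, ?_, ((hasDerivAt_id x).rpow_one_sub_mul_rpow p hφ' hx0 hφ0).add
    (((hasDerivAt_id x).const_sub 1).rpow_one_sub_mul_rpow p (hφ'.const_sub 1) h1x hφ1)⟩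
  simp only [id_eq]
  rw [ha2, hb2]
  linarith [rpow_two_mul_sub_one_mul_lt_of_lt hp hb hba,
    sq_rpow_sub_one_mul (p := p) (hb.trans hba) b, sq_rpow_sub_one_mul (p := p) hb a]

theorem stmt_18 (t p : ℝ) (ht : t ∈ Set.Ioo (0 : ℝ) 1) (hp : 1 < p) :
    StrictAntiOn (fun x : ℝ =>
      x ^ (1 - p) * ((Real.sqrt (x * (1 - t)) + Real.sqrt (t * (1 - x))) ^ 2) ^ p
        + (1 - x) ^ (1 - p) * (1 - (Real.sqrt (x * (1 - t)) + Real.sqrt (t * (1 - x))) ^ 2) ^ p)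
      (Set.Ioo 0 (1 - t)) := by
  change StrictAntiOn
    (fun x ↦ x ^ (1 - p) * phi t x ^ p + (1 - x) ^ (1 - p) * (1 - phi t x) ^ p) _
  apply strictAntiOn_of_deriv_neg (convex_Ioo 0 (1 - t))
  · intro x hx
    obtain ⟨_, _, hf⟩ := exists_neg_hasDerivAt_rpow_phi ht.1 hp hx
    exact hf.continuousAt.continuousWithinAt
  · intro x hx
    rw [interior_Ioo] at hx
    obtain ⟨f', hf'_neg, hf⟩ := exists_neg_hasDerivAt_rpow_phi ht.1 hp hx
    rwa [hf.deriv]
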